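/- As formal power series in ℤ[[q]], the following 2-dissection identity holds: 1/f₁² = f₈⁵/(f₂⁵·f₁₆²) + 2q·f₄²·f₁₆²/(f₂⁵·f₈). Equivalently, after clearing denominators: f₂⁵·f₈·f₁₆² = f₁²·(f₈⁶ + 2q·f₄²·f₁₆⁴). -/

import Mathlib

open PowerSeries Finset

noncomputable section JTP

variable {A : Type*} [CommRing A]

/-- Gaussian binomial via Pascal recursion `[n+1;k+1] = [n;k+1] + y^(n-k)·[n;k]`. -/
def qb (y : A) : ℕ → ℕ → A
  | 0, 0 => 1
  | 0, _+1 => 0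
  | n+1, 0 => qb y n 0
  | n+1, k+1 => qb y n (k+1) + y^(n-k) * qb y n k

@[simp] lemma qb_zero_right (y : A) : ∀ n, qb y n 0 = 1
  | 0 => rfl
  | n+1 => qb_zero_right y n

lemma qb_eq_zero (y : A) : ∀ n k, n < k → qb y n k = 0
  | 0, _+1, _ => rfl
  | n+1, k+1, h => by
      rw [qb, qb_eq_zero y n (k+1) (by omega), qb_eq_zero y n k (by omega)]
      ring

@[simp] lemma qb_self (y : A) : ∀ n, qb y n n = 1
  | 0 => rfl
  | n+1 => by
      rw [qb, qb_eq_zero y n (n+1) (by omega), qb_self y n, Nat.sub_self]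
      ring

lemma qb_one (y : A) : ∀ n, qb y n 1 = ∑ i ∈ range n, y ^ i
  | 0 => by simp [qb]
  | n+1 => by
      rw [qb, qb_one y n, qb_zero_right, Finset.sum_range_succ, Nat.sub_zero]
      ring

lemma geom_aux (y : A) (n : ℕ) : (1 - y) * (∑ i ∈ range n, y ^ i) = 1 - y ^ n := by
  induction n with
  | zero => simp
  | succ n ih => rw [Finset.sum_range_succ, mul_add, ih, pow_succ]; ring

lemma qb_succ_succ (y : A) (n k : ℕ) :
    qb y (n+1) (k+1) = qb y n (k+1) + y^(n-k) * qb y n k := by rw [qb]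

lemma qb_pascalB (y : A) : ∀ n k, qb y (n+1) (k+1) = y^(k+1) * qb y n (k+1) + qb y n k
  | 0, 0 => by simp [qb]
  | 0, k+1 => by
      rw [qb_succ_succ, qb_eq_zero y 0 (k+1+1) (by omega), qb_eq_zero y 0 (k+1) (by omega)]
      ring
  | n+1, 0 => by
      rw [qb_succ_succ, qb_one, qb_zero_right, Nat.sub_zero, mul_one,
        ← Finset.sum_range_succ, geom_sum_succ]
      ring
  | n+1, k+1 => by
      rcases le_or_gt n k with h | h
      · rcases eq_or_lt_of_le h with rfl | h'
        · rw [qb_succ_succ, qb_eq_zero y (n+1) (n+1+1) (by omega)]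
          simp
        · rw [qb_eq_zero y (n+1+1) (k+1+1) (by omega), qb_eq_zero y (n+1) (k+1+1) (by omega),
            qb_eq_zero y (n+1) (k+1) (by omega)]
          ring
      · conv_lhs => rw [qb_succ_succ y (n+1) (k+1)]
        conv_lhs => rw [qb_pascalB y n (k+1), qb_pascalB y n k]
        conv_rhs => rw [qb_succ_succ y n (k+1), qb_succ_succ y n k]
        simp only [show n+1-(k+1) = n-k from by omega,
          show n-k = (n-(k+1))+1 from by omega, pow_succ]
        ring

lemma qb_absorb (y : A) : ∀ n k, (1 - y^(k+1)) * qb y n (k+1) = (1 - y^(n-k)) * qb y n k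
  | 0, k => by
      rw [qb_eq_zero y 0 (k+1) (by omega), show (0:ℕ)-k = 0 from by omega]
      simp
  | n+1, 0 => by
      rw [qb_one, qb_zero_right, Nat.sub_zero]
      simp only [zero_add, pow_one]
      rw [geom_aux]
      ring
  | n+1, k+1 => by
      rcases le_or_gt n k with h | h
      · rw [qb_eq_zero y (n+1) (k+1+1) (by omega), show n+1-(k+1) = 0 from by omega]
        simp
      · have ih1 := qb_absorb y n (k+1)
        have ih2 := qb_absorb y n k
        rw [qb_succ_succ y n (k+1), qb_succ_succ y n k]
        simp only [show n+1-(k+1) = n-k from by omega,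
          show n-k = (n-(k+1))+1 from by omega, pow_succ] at *
        linear_combination ih1 + y^(n-(k+1)) * y * ih2

lemma qb_dagger (y : A) (n k : ℕ) :
    qb y (n+1+1) (k+1+1)
      = (1 + y^(n+1)) * qb y n (k+1) + y^(k+1+1) * qb y n (k+1+1) + y^(n-k) * qb y n k := by
  rcases le_or_gt n k with h | h
  · rcases eq_or_lt_of_le h with rfl | h'
    · rw [qb_self, qb_self, qb_eq_zero y n (n+1) (by omega), qb_eq_zero y n (n+1+1) (by omega),
        Nat.sub_self]
      ring
    · rw [qb_eq_zero y (n+1+1) (k+1+1) (by omega), qb_eq_zero y n (k+1) (by omega),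
        qb_eq_zero y n (k+1+1) (by omega), qb_eq_zero y n k (by omega)]
      ring
  · have habs := qb_absorb y n k
    rw [qb_succ_succ y (n+1) (k+1), qb_pascalB y n (k+1), qb_succ_succ y n k]
    simp only [show n+1-(k+1) = n-k from by omega] at *
    simp only [show n-k = (n-(k+1))+1 from by omega] at *
    simp only [show n+1 = (n-(k+1))+1+(k+1) from by omega] at *
    simp only [pow_add, pow_succ] at *
    linear_combination y^(n-(k+1)) * y * habs

def Dpoly (y : A) (m : ℕ) : A := ∏ i ∈ range m, (1 - y^(i+1))

lemma Dpoly_succ (y : A) (m : ℕ) : Dpoly y (m+1) = Dpoly y m * (1 - y^(m+1)) :=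
  Finset.prod_range_succ _ _

@[simp] lemma Dpoly_zero (y : A) : Dpoly y 0 = 1 := rfl

lemma qb_mul_D (y : A) : ∀ n k, k ≤ n → qb y n k * Dpoly y k * Dpoly y (n-k) = Dpoly y n
  | 0, 0, _ => by simp
  | 0, k+1, h => by omega
  | n+1, 0, _ => by simp
  | n+1, k+1, h => by
      rcases eq_or_lt_of_le h with he | h'
      · rw [← he, qb_self, Nat.sub_self]
        simp
      · have ih1 := qb_mul_D y n (k+1) (by omega)
        have ih2 := qb_mul_D y n k (by omega)
        rw [qb_succ_succ y n k, Dpoly_succ y n, Dpoly_succ y k]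
        simp only [show n+1-(k+1) = n-k from by omega] at *
        simp only [show n-k = (n-(k+1))+1 from by omega] at *
        rw [Dpoly_succ y (n-(k+1))]
        simp only [show n+1 = (n-(k+1))+1+(k+1) from by omega] at *
        simp only [pow_add, pow_succ] at *
        rw [Dpoly_succ y k] at ih1
        rw [Dpoly_succ y (n-(k+1))] at ih2
        simp only [pow_succ] at ih1 ih2
        linear_combination (1 - y^(n-(k+1)) * y) * ih1
          + y^(n-(k+1)) * y * (1 - y^k * y) * ih2

/-- exponent `(k-N)^2` for the bilateral theta sum. -/
def EE (N k : ℕ) : ℕ := Nat.dist k N ^ 2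

lemma EE_cast (N k : ℕ) : ((EE N k : ℤ)) = ((k:ℤ) - N)^2 := by
  unfold EE
  rcases le_total k N with h | h
  · rw [Nat.dist_eq_sub_of_le h]
    push_cast [h]
    ring
  · rw [Nat.dist_eq_sub_of_le_right h]
    push_cast [h]
    ring

example (N k : ℕ) : EE (N+1) (k+1+1) = EE N (k+1) := by
  have : ((EE (N+1) (k+1+1) : ℤ)) = ((EE N (k+1) : ℤ)) := by
    rw [EE_cast, EE_cast]; push_cast; ring
  exact_mod_cast this

lemma sum_shift1 (g : ℕ → A) (n : ℕ) (h1 : g (n+1) = 0) :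
    (∑ k ∈ range (n+1), g (k+1)) + g 0 = ∑ k ∈ range (n+1), g k := by
  rw [← Finset.sum_range_succ' g (n+1), Finset.sum_range_succ, h1, add_zero]

lemma sum_shift2 (g : ℕ → A) (n : ℕ) (h1 : g (n+1) = 0) (h2 : g (n+1+1) = 0) :
    (∑ k ∈ range (n+1), g (k+1+1)) + g 1 + g 0 = ∑ k ∈ range (n+1), g k := by
  have e1 := Finset.sum_range_succ' (fun k => g (k+1)) (n+1)
  have e2 := Finset.sum_range_succ' g (n+1+1)
  have e3 := Finset.sum_range_succ g (n+1+1)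
  have e4 := Finset.sum_range_succ g (n+1)
  simp only [zero_add] at e1 e2
  linear_combination (-1 : A) * e1 - e2 + e3 + e4 + h1 + h2

lemma jtp (x z : A) : ∀ N : ℕ,
    (∏ j ∈ range N, (1 + z * x^(2*j+1))) * (∏ j ∈ range N, (z + x^(2*j+1)))
      = ∑ k ∈ range (2*N+1), z^k * x^(EE N k) * qb (x^2) (2*N) k := by
  intro N
  induction N with
  | zero => simp [EE, qb]
  | succ N ih =>
    rw [Finset.prod_range_succ, Finset.prod_range_succ]
    have step1 : (∏ j ∈ range N, (1 + z * x ^ (2 * j + 1))) * (1 + z * x ^ (2 * N + 1)) *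
        ((∏ j ∈ range N, (z + x ^ (2 * j + 1))) * (z + x ^ (2 * N + 1)))
        = ((∏ j ∈ range N, (1 + z * x ^ (2 * j + 1))) * (∏ j ∈ range N, (z + x ^ (2 * j + 1)))) *
          ((1 + z * x ^ (2 * N + 1)) * (z + x ^ (2 * N + 1))) := by ring
    rw [step1, ih, Finset.sum_mul]
    symm
    simp only [show 2*(N+1)+1 = (2*N+1)+1+1 from by ring, show 2*(N+1) = (2*N)+1+1 from by ring]
    rw [Finset.sum_range_succ', Finset.sum_range_succ']
    have hsum : ∀ k ∈ range (2*N+1),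
        z^(k+1+1) * x^(EE (N+1) (k+1+1)) * qb (x^2) (2*N+1+1) (k+1+1)
        = z^(k+1+1) * x^(EE N (k+1)) * ((1:A)+x^(4*N+2)) * qb (x^2) (2*N) (k+1)
          + z^(k+1+1) * x^(EE N (k+1+1) + (2*N+1)) * qb (x^2) (2*N) (k+1+1)
          + z^(k+1+1) * x^(EE N k + (2*N+1)) * qb (x^2) (2*N) k := by
      intro k hk
      have hk' : k ≤ 2*N := by
        have := Finset.mem_range.mp hk; omega
      rw [qb_dagger (x^2) (2*N) k]
      have p1 : x^(EE (N+1) (k+1+1)) * (x^2)^(2*N-k) = x^(EE N k + (2*N+1)) := by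
        rw [← pow_mul, ← pow_add]
        congr 1
        have : ((EE (N+1) (k+1+1) + 2*(2*N-k) : ℕ) : ℤ) = ((EE N k + (2*N+1) : ℕ) : ℤ) := by
          push_cast [hk']
          rw [EE_cast, EE_cast]
          push_cast
          ring
        exact_mod_cast this
      have p2 : x^(EE (N+1) (k+1+1)) * (x^2)^(k+1+1) = x^(EE N (k+1+1) + (2*N+1)) := by
        rw [← pow_mul, ← pow_add]
        congr 1
        have : ((EE (N+1) (k+1+1) + 2*(k+1+1) : ℕ) : ℤ) = ((EE N (k+1+1) + (2*N+1) : ℕ) : ℤ) := by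
          push_cast
          rw [EE_cast, EE_cast]
          push_cast
          ring
        exact_mod_cast this
      have p3 : x^(EE (N+1) (k+1+1)) * (x^2)^(2*N+1) = x^(EE N (k+1)) * x^(4*N+2) := by
        rw [← pow_mul, ← pow_add, ← pow_add]
        congr 1
        have : ((EE (N+1) (k+1+1) + 2*(2*N+1) : ℕ) : ℤ) = ((EE N (k+1) + (4*N+2) : ℕ) : ℤ) := by
          push_cast
          rw [EE_cast, EE_cast]
          push_cast
          ring
        exact_mod_cast this
      have p4 : x^(EE (N+1) (k+1+1)) = x^(EE N (k+1)) := by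
        congr 1
        have : ((EE (N+1) (k+1+1) : ℕ) : ℤ) = ((EE N (k+1) : ℕ) : ℤ) := by
          rw [EE_cast, EE_cast]; push_cast; ring
        exact_mod_cast this
      linear_combination z^(k+1+1) * qb (x^2) (2*N) k * p1
        + z^(k+1+1) * qb (x^2) (2*N) (k+1+1) * p2
        + z^(k+1+1) * qb (x^2) (2*N) (k+1) * p3
        + z^(k+1+1) * qb (x^2) (2*N) (k+1) * p4
    rw [Finset.sum_congr rfl hsum]
    rw [Finset.sum_add_distrib, Finset.sum_add_distrib]
    simp only [zero_add]
    have hA := sum_shift1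
      (fun k => z^(k+1) * x^(EE N k) * ((1:A)+x^(4*N+2)) * qb (x^2) (2*N) k) (2*N)
      (by simp only [qb_eq_zero (x^2) (2*N) (2*N+1) (by omega), mul_zero])
    have hB := sum_shift2
      (fun k => z^k * x^(EE N k + (2*N+1)) * qb (x^2) (2*N) k) (2*N)
      (by simp only [qb_eq_zero (x^2) (2*N) (2*N+1) (by omega), mul_zero])
      (by simp only [qb_eq_zero (x^2) (2*N) (2*N+1+1) (by omega), mul_zero])
    have hR : ∀ k ∈ range (2*N+1),
        z^k * x^(EE N k) * qb (x^2) (2*N) k * ((1 + z*x^(2*N+1)) * (z + x^(2*N+1)))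
        = (z^(k+1) * x^(EE N k) * ((1:A)+x^(4*N+2)) * qb (x^2) (2*N) k)
          + ((z^k * x^(EE N k + (2*N+1)) * qb (x^2) (2*N) k)
          + (z^(k+1+1) * x^(EE N k + (2*N+1)) * qb (x^2) (2*N) k)) := by
      intro k hk
      rw [pow_add, show 4*N+2 = (2*N+1)+(2*N+1) from by ring, pow_add]
      ring
    rw [Finset.sum_congr rfl hR, Finset.sum_add_distrib, Finset.sum_add_distrib]
    have q1 : EE (N+1) 1 = EE N 0 := by
      have : ((EE (N+1) 1 : ℤ)) = ((EE N 0 : ℤ)) := by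
        rw [EE_cast, EE_cast]; push_cast; ring
      exact_mod_cast this
    have q2 : EE (N+1) 0 = EE N 0 + (2*N+1) := by
      have : ((EE (N+1) 0 : ℤ)) = ((EE N 0 + (2*N+1) : ℕ) : ℤ) := by
        rw [EE_cast]; push_cast; rw [EE_cast]; push_cast; ring
      exact_mod_cast this
    have q3 : EE N 1 + (2*N+1) = EE N 0 + 2 := by
      have : ((EE N 1 + (2*N+1) : ℕ) : ℤ) = ((EE N 0 + 2 : ℕ) : ℤ) := by
        push_cast; rw [EE_cast, EE_cast]; push_cast; ring
      exact_mod_cast this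
    have hbound : z^1 * x^(EE (N+1) 1) * qb (x^2) (2*N+1+1) 1
          + z^0 * x^(EE (N+1) 0) * qb (x^2) (2*N+1+1) 0
        = z^(0+1) * x^(EE N 0) * ((1:A)+x^(4*N+2)) * qb (x^2) (2*N) 0
          + (z^1 * x^(EE N 1 + (2*N+1)) * qb (x^2) (2*N) 1
          + z^0 * x^(EE N 0 + (2*N+1)) * qb (x^2) (2*N) 0) := by
      rw [qb_one, qb_one, qb_zero_right, qb_zero_right, q1, q2, q3]
      have hq : (∑ i ∈ range (2*N+1+1), (x^2)^i)
          = 1 + (x^2)^(2*N+1) + x^2 * ∑ i ∈ range (2*N), (x^2)^i := by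
        rw [Finset.sum_range_succ, geom_sum_succ]; ring
      rw [hq, pow_add, pow_add, show 4*N+2 = 2*(2*N+1) from by ring, pow_mul]
      ring
    linear_combination hA + hB + hbound


/-! ## Power series part -/

open PowerSeries

/-- `f k` is the formal power series `∏_{n ≥ 1} (1 - q^(k*n))` in `ℤ[[q]]`,
defined coefficientwise via partial products (the coefficient of `q^n` is
stable once the partial product includes all factors with `k*m ≤ n`). -/
noncomputable def f (k : ℕ) : PowerSeries ℤ :=
  PowerSeries.mk fun n =>
    PowerSeries.coeff n
      (∏ m ∈ Finset.range (n + 1), (1 - (PowerSeries.X : PowerSeries ℤ) ^ (k * (m + 1))))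

/-- The multiplicative inverse of `f k` in `ℤ[[q]]` (the constant coefficient of `f k` is `1`). -/
noncomputable def finv (k : ℕ) : PowerSeries ℤ := (f k).invOfUnit 1

/-- congruence mod `X^(n+1)` -/
def MD (n : ℕ) (a b : PowerSeries ℤ) : Prop := (X : PowerSeries ℤ)^(n+1) ∣ (a - b)

lemma MD_refl (n : ℕ) (a : PowerSeries ℤ) : MD n a a := by simp [MD]

lemma MD_symm {n a b} (h : MD n a b) : MD n b a := by
  unfold MD at *
  rw [show b - a = -(a-b) from by ring]
  exact h.neg_right

lemma MD_trans {n a b c} (h1 : MD n a b) (h2 : MD n b c) : MD n a c := by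
  have := dvd_add h1 h2
  simpa [MD, sub_add_sub_cancel] using this

lemma MD_add {n a b c d} (h1 : MD n a b) (h2 : MD n c d) : MD n (a+c) (b+d) := by
  have := dvd_add h1 h2
  unfold MD at *
  convert this using 1
  ring

lemma MD_mul {n a b c d} (h1 : MD n a b) (h2 : MD n c d) : MD n (a*c) (b*d) := by
  unfold MD at *
  have : a*c - b*d = a*(c-d) + (a-b)*d := by ring
  rw [this]
  exact dvd_add (Dvd.dvd.mul_left h2 a) (Dvd.dvd.mul_right h1 d)

lemma MD_congr {n a b a' b'} (ha : a = a') (hb : b = b') (h : MD n a b) : MD n a' b' :=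
  ha ▸ hb ▸ h

lemma MD_sum {n : ℕ} {s : Finset ℕ} {F G : ℕ → PowerSeries ℤ}
    (h : ∀ i ∈ s, MD n (F i) (G i)) : MD n (∑ i ∈ s, F i) (∑ i ∈ s, G i) := by
  unfold MD at *
  rw [← Finset.sum_sub_distrib]
  exact Finset.dvd_sum h

lemma MD_of_pow {n e : ℕ} (he : n+1 ≤ e) (t : PowerSeries ℤ) : MD n ((X:PowerSeries ℤ)^e * t) 0 := by
  unfold MD
  rw [sub_zero]
  exact Dvd.dvd.mul_right (pow_dvd_pow _ he) t

lemma MD_coeff {n a b} (h : MD n a b) {j : ℕ} (hj : j ≤ n) :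
    (coeff j) a = (coeff j) b := by
  have := (PowerSeries.X_pow_dvd_iff.mp h) j (by omega)
  rw [map_sub] at this
  linarith

lemma eq_of_MD {a b : PowerSeries ℤ} (h : ∀ n, MD n a b) : a = b := by
  ext j
  exact MD_coeff (h j) le_rfl

def Dp (c M : ℕ) : PowerSeries ℤ := ∏ m ∈ range M, (1 - X^(c*(m+1)))
def Gp (c M : ℕ) : PowerSeries ℤ := ∏ m ∈ range M, (1 + X^(c*(m+1)))
def Go (c M : ℕ) : PowerSeries ℤ := ∏ m ∈ range M, (1 + X^(c*(2*m+1)))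

lemma Dp_eq_Dpoly (c M : ℕ) : Dp c M = Dpoly ((X : PowerSeries ℤ)^c) M := by
  unfold Dp Dpoly
  exact Finset.prod_congr rfl fun i _ => by rw [← pow_mul]

lemma Dp_dvd_sub (c : ℕ) {M M' : ℕ} (h : M ≤ M') :
    (X : PowerSeries ℤ)^(c*(M+1)) ∣ Dp c M' - Dp c M := by
  induction M' with
  | zero => simp [show M = 0 from by omega]
  | succ M' ih =>
    rcases eq_or_lt_of_le h with rfl | h'
    · simp
    · have h2 : M ≤ M' := by omega
      have hDp : Dp c (M'+1) = Dp c M' * (1 - X^(c*(M'+1))) := Finset.prod_range_succ _ _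
      have hd : (X : PowerSeries ℤ)^(c*(M+1)) ∣ Dp c (M'+1) - Dp c M' := by
        rw [hDp]
        have : Dp c M' * (1 - X^(c*(M'+1))) - Dp c M' = -(X^(c*(M'+1)) * Dp c M') := by ring
        rw [this]
        exact Dvd.dvd.neg_right (Dvd.dvd.mul_right (pow_dvd_pow _ (by
          have : M+1 ≤ M'+1 := by omega
          exact Nat.mul_le_mul_left c this)) _)
      have := dvd_add hd (ih h2)
      simpa [sub_add_sub_cancel] using this

lemma coeff_f (k j : ℕ) : (coeff j) (f k) = (coeff j) (Dp k (j+1)) := by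
  unfold f Dp
  rw [coeff_mk]

lemma f_MD (c : ℕ) (hc : 1 ≤ c) {n M : ℕ} (hM : n+1 ≤ M) : MD n (f c) (Dp c M) := by
  unfold MD
  rw [PowerSeries.X_pow_dvd_iff]
  intro j hj
  rw [map_sub, coeff_f]
  have hd := Dp_dvd_sub c (show j+1 ≤ M from by omega)
  have := (PowerSeries.X_pow_dvd_iff.mp hd) j (by
    have : j + 1 ≤ c * (j+1+1) := by nlinarith
    omega)
  rw [map_sub] at this
  linarith

lemma constCoeff_f (c : ℕ) (hc : 1 ≤ c) : constantCoeff (f c) = 1 := by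
  rw [← coeff_zero_eq_constantCoeff, coeff_f]
  unfold Dp
  have hcc : ∀ m : ℕ, c * (m+1) ≠ 0 := fun m => by positivity
  have hc0 : ¬ c = 0 := by omega
  simp [coeff_zero_eq_constantCoeff, map_prod, map_sub, map_pow, constantCoeff_X, zero_pow, hcc, hc0, Ne.symm hc0]

lemma f_mul_finv (c : ℕ) (hc : 1 ≤ c) : f c * finv c = 1 := by
  apply PowerSeries.mul_invOfUnit
  rw [constCoeff_f c hc]
  rfl

lemma Dp_mul_Gp (c M : ℕ) : Dp c M * Gp c M = Dp (2*c) M := by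
  unfold Dp Gp
  rw [← Finset.prod_mul_distrib]
  apply Finset.prod_congr rfl
  intro i _
  have h : (X : PowerSeries ℤ)^(c*(i+1)) * X^(c*(i+1)) = X^(2*c*(i+1)) := by
    rw [← pow_add]; congr 1; ring
  linear_combination -h

lemma Gp_split (c : ℕ) : ∀ M, Gp c (2*M) = Go c M * Gp (2*c) M := by
  intro M
  induction M with
  | zero => simp [Gp, Go]
  | succ M ih =>
    have hb : 2*(M+1) = (2*M)+1+1 := by ring
    rw [hb]
    unfold Gp Go at *
    rw [Finset.prod_range_succ, Finset.prod_range_succ, Finset.prod_range_succ,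
      Finset.prod_range_succ, ih]
    rw [show c*(2*M+1+1) = 2*c*(M+1) from by ring]
    ring

lemma fG (c : ℕ) (hc : 1 ≤ c) {n M : ℕ} (hM : n+1 ≤ M) : MD n (f c * Gp c M) (f (2*c)) := by
  have h1 : MD n (f c * Gp c M) (Dp c M * Gp c M) := MD_mul (f_MD c hc hM) (MD_refl _ _)
  rw [Dp_mul_Gp] at h1
  exact MD_trans h1 (MD_symm (f_MD (2*c) (by omega) hM))

lemma Go_f (c : ℕ) (hc : 1 ≤ c) {n M : ℕ} (hM : n+1 ≤ M) :
    MD n (Go c M * f c * f (4*c)) (f (2*c) * f (2*c)) := by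
  have h4 : MD n (f (2*c) * Gp (2*c) M) (f (4*c)) := by
    have := fG (2*c) (by omega) hM
    rwa [show 2*(2*c) = 4*c from by ring] at this
  have step1 : MD n (Go c M * f c * f (4*c)) (Go c M * f c * (f (2*c) * Gp (2*c) M)) :=
    MD_mul (MD_refl _ _) (MD_symm h4)
  have e : Go c M * f c * (f (2*c) * Gp (2*c) M) = (f c * Gp c (2*M)) * f (2*c) := by
    rw [Gp_split]; ring
  have step2 : MD n ((f c * Gp c (2*M)) * f (2*c)) (f (2*c) * f (2*c)) :=
    MD_mul (fG c hc (by omega)) (MD_refl _ _)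
  exact MD_trans (MD_congr rfl e step1) step2

lemma qb_central (c : ℕ) (hc : 1 ≤ c) {n N k : ℕ} (hk1 : n+1 ≤ k) (hk2 : k + (n+1) ≤ 2*N) :
    MD n (qb ((X : PowerSeries ℤ)^(2*c)) (2*N) k) (finv (2*c)) := by
  have hprod := qb_mul_D ((X : PowerSeries ℤ)^(2*c)) (2*N) k (by omega)
  rw [← Dp_eq_Dpoly, ← Dp_eq_Dpoly, ← Dp_eq_Dpoly] at hprod
  have hf1 : MD n (Dp (2*c) k) (f (2*c)) := MD_symm (f_MD (2*c) (by omega) hk1)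
  have hf2 : MD n (Dp (2*c) (2*N-k)) (f (2*c)) := MD_symm (f_MD (2*c) (by omega) (by omega))
  have hf3 : MD n (Dp (2*c) (2*N)) (f (2*c)) := MD_symm (f_MD (2*c) (by omega) (by omega))
  set Q := qb ((X : PowerSeries ℤ)^(2*c)) (2*N) k with hQ
  have h1 : MD n (Q * f (2*c) * f (2*c)) (f (2*c)) := by
    have := MD_mul (MD_mul (MD_refl n Q) (MD_symm hf1)) (MD_symm hf2)
    exact MD_trans (MD_congr rfl hprod this) hf3
  have hu := f_mul_finv (2*c) (by omega)
  have h2 := MD_mul h1 (MD_refl n (finv (2*c) * finv (2*c)))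
  have e1 : Q * f (2*c) * f (2*c) * (finv (2*c) * finv (2*c)) = Q := by
    linear_combination (Q * (f (2*c) * finv (2*c)) + Q) * hu
  have e2 : f (2*c) * (finv (2*c) * finv (2*c)) = finv (2*c) := by
    linear_combination finv (2*c) * hu
  exact MD_congr e1 e2 h2

def EPsi (N k : ℕ) : ℕ := if N ≤ k then (k-N)*(k-N+1) else (N-k)*(N-k-1)

lemma EPsi_cast (N k : ℕ) : ((EPsi N k : ℤ)) = ((k:ℤ) - N)^2 + ((k:ℤ) - N) := by
  unfold EPsi
  rcases le_or_gt N k with h | h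
  · rw [if_pos h]
    push_cast [h]
    ring
  · rw [if_neg (by omega)]
    have h1 : k ≤ N := by omega
    have h2 : (1:ℕ) ≤ N - k := by omega
    push_cast [h1, h2]
    ring

lemma EE_add_self (N k : ℕ) : k + EE N k = N + EPsi N k := by
  have : ((k + EE N k : ℕ) : ℤ) = ((N + EPsi N k : ℕ) : ℤ) := by
    push_cast
    rw [EE_cast, EPsi_cast]
    ring
  exact_mod_cast this

lemma dist_le_of_EE {n N k : ℕ} (h : EE N k ≤ n) : Nat.dist k N ≤ n := by
  unfold EE at h
  nlinarith [Nat.dist k N, sq_nonneg (Nat.dist k N)]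

lemma dist_le_of_EPsi {n N k : ℕ} (h : EPsi N k ≤ n) : Nat.dist k N ≤ n+1 := by
  unfold EPsi at h
  rcases le_or_gt N k with hnk | hnk
  · rw [if_pos hnk] at h
    rw [Nat.dist_eq_sub_of_le_right hnk]
    nlinarith [Nat.sub_le k N]
  · rw [if_neg (by omega)] at h
    rw [Nat.dist_eq_sub_of_le (by omega : k ≤ N)]
    by_contra hcon
    have h1 : n + 2 ≤ N - k := by omega
    have h2 : n + 1 ≤ N - k - 1 := by omega
    have h3 := Nat.mul_le_mul h1 h2
    nlinarith

lemma sum_MD_phi (c : ℕ) (hc : 1 ≤ c) {n N : ℕ} (hN : 2*n+1 ≤ N) :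
    MD n (∑ k ∈ range (2*N+1), (X : PowerSeries ℤ)^(c * EE N k) * qb ((X:PowerSeries ℤ)^(2*c)) (2*N) k)
       ((∑ k ∈ range (2*N+1), (X : PowerSeries ℤ)^(c * EE N k)) * finv (2*c)) := by
  rw [Finset.sum_mul]
  apply MD_sum
  intro k hk
  have hk' : k ≤ 2*N := by have := Finset.mem_range.mp hk; omega
  rcases le_or_gt (n+1) (c * EE N k) with h | h
  · unfold MD
    rw [show (X : PowerSeries ℤ)^(c * EE N k) * qb ((X:PowerSeries ℤ)^(2*c)) (2*N) k
        - (X : PowerSeries ℤ)^(c * EE N k) * finv (2*c)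
        = (X : PowerSeries ℤ)^(c * EE N k) * (qb ((X:PowerSeries ℤ)^(2*c)) (2*N) k - finv (2*c))
        from by ring]
    exact Dvd.dvd.mul_right (pow_dvd_pow _ h) _
  · have hE : EE N k ≤ n := by nlinarith
    have hd : Nat.dist k N ≤ n := dist_le_of_EE hE
    have hdist : k ≤ N + n ∧ N ≤ k + n := by
      unfold Nat.dist at hd
      omega
    exact MD_mul (MD_refl _ _) (qb_central c hc (by omega) (by omega))

lemma sum_MD_psi (c : ℕ) (hc : 1 ≤ c) {n N : ℕ} (hN : 2*n+2 ≤ N) :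
    MD n (∑ k ∈ range (2*N+1), (X : PowerSeries ℤ)^(c * EPsi N k) * qb ((X:PowerSeries ℤ)^(2*c)) (2*N) k)
       ((∑ k ∈ range (2*N+1), (X : PowerSeries ℤ)^(c * EPsi N k)) * finv (2*c)) := by
  rw [Finset.sum_mul]
  apply MD_sum
  intro k hk
  have hk' : k ≤ 2*N := by have := Finset.mem_range.mp hk; omega
  rcases le_or_gt (n+1) (c * EPsi N k) with h | h
  · unfold MD
    rw [show (X : PowerSeries ℤ)^(c * EPsi N k) * qb ((X:PowerSeries ℤ)^(2*c)) (2*N) k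
        - (X : PowerSeries ℤ)^(c * EPsi N k) * finv (2*c)
        = (X : PowerSeries ℤ)^(c * EPsi N k) * (qb ((X:PowerSeries ℤ)^(2*c)) (2*N) k - finv (2*c))
        from by ring]
    exact Dvd.dvd.mul_right (pow_dvd_pow _ h) _
  · have hE : EPsi N k ≤ n := by nlinarith
    have hd : Nat.dist k N ≤ n+1 := dist_le_of_EPsi hE
    have hdist : k ≤ N + (n+1) ∧ N ≤ k + (n+1) := by
      unfold Nat.dist at hd
      omega
    exact MD_mul (MD_refl _ _) (qb_central c hc (by omega) (by omega))

def Sphi (c K : ℕ) : PowerSeries ℤ := ∑ k ∈ range (2*K+1), (X:PowerSeries ℤ)^(c * EE K k)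
def Spsi (c N : ℕ) : PowerSeries ℤ := ∑ k ∈ range (2*N+1), (X:PowerSeries ℤ)^(c * EPsi N k)

lemma phi_prod (c : ℕ) (hc : 1 ≤ c) {n N : ℕ} (hN : 2*n+1 ≤ N) :
    MD n (Go c N ^ 2 * f (2*c)) (Sphi c N) := by
  have hj := jtp ((X:PowerSeries ℤ)^c) 1 N
  have hL1 : (∏ j ∈ range N, ((1:PowerSeries ℤ) + 1 * ((X:PowerSeries ℤ)^c)^(2*j+1))) = Go c N := by
    unfold Go
    apply Finset.prod_congr rfl
    intro j _
    rw [one_mul, ← pow_mul]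
  have hL2 : (∏ j ∈ range N, ((1:PowerSeries ℤ) + ((X:PowerSeries ℤ)^c)^(2*j+1))) = Go c N := by
    unfold Go
    apply Finset.prod_congr rfl
    intro j _
    rw [← pow_mul]
  have hR : ∀ k ∈ range (2*N+1),
      (1:PowerSeries ℤ)^k * ((X:PowerSeries ℤ)^c)^(EE N k) * qb (((X:PowerSeries ℤ)^c)^2) (2*N) k
      = (X:PowerSeries ℤ)^(c*EE N k) * qb ((X:PowerSeries ℤ)^(2*c)) (2*N) k := by
    intro k _
    rw [one_pow, one_mul, ← pow_mul, ← pow_mul, show c*2 = 2*c from by ring]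
  rw [hL1, hL2, Finset.sum_congr rfl hR] at hj
  have h1 := sum_MD_phi c hc hN
  rw [← hj] at h1
  have h2 := MD_mul h1 (MD_refl n (f (2*c)))
  have hu := f_mul_finv (2*c) (by omega)
  have e1 : Go c N * Go c N * f (2*c) = Go c N ^2 * f (2*c) := by ring
  have e2 : (∑ k ∈ range (2*N+1), (X:PowerSeries ℤ)^(c * EE N k)) * finv (2*c) * f (2*c)
      = Sphi c N := by
    unfold Sphi
    linear_combination (∑ k ∈ range (2*N+1), (X:PowerSeries ℤ)^(c * EE N k)) * hu
  exact MD_congr e1 e2 h2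

lemma jtp_psi (c : ℕ) (N : ℕ) :
    (2 : PowerSeries ℤ) * Gp (2*c) (N+1) * Gp (2*c) N
      = ∑ k ∈ range (2*(N+1)+1),
          (X:PowerSeries ℤ)^(c * EPsi (N+1) k) * qb ((X:PowerSeries ℤ)^(2*c)) (2*(N+1)) k := by
  have hj := jtp ((X:PowerSeries ℤ)^c) ((X:PowerSeries ℤ)^c) (N+1)
  have hL1 : (∏ j ∈ range (N+1), ((1:PowerSeries ℤ) + (X:PowerSeries ℤ)^c * ((X:PowerSeries ℤ)^c)^(2*j+1)))
      = Gp (2*c) (N+1) := by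
    unfold Gp
    apply Finset.prod_congr rfl
    intro j _
    have h : (X:PowerSeries ℤ)^c * ((X:PowerSeries ℤ)^c)^(2*j+1) = (X:PowerSeries ℤ)^(2*c*(j+1)) := by
      rw [← pow_succ', ← pow_mul]
      congr 1
      ring
    rw [h]
  have hL2 : (∏ j ∈ range (N+1), ((X:PowerSeries ℤ)^c + ((X:PowerSeries ℤ)^c)^(2*j+1)))
      = (X:PowerSeries ℤ)^(c*(N+1)) * (2 * Gp (2*c) N) := by
    have hfac : ∀ j ∈ range (N+1), (X:PowerSeries ℤ)^c + ((X:PowerSeries ℤ)^c)^(2*j+1)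
        = (X:PowerSeries ℤ)^c * (1 + ((X:PowerSeries ℤ)^c)^(2*j)) := by
      intro j _
      rw [mul_add, mul_one, ← pow_succ']
    rw [Finset.prod_congr rfl hfac, Finset.prod_mul_distrib, Finset.prod_const,
      Finset.card_range, Finset.prod_range_succ']
    have h0 : (1:PowerSeries ℤ) + ((X:PowerSeries ℤ)^c)^(2*0) = 2 := by norm_num
    have hG : (∏ j ∈ range N, ((1:PowerSeries ℤ) + ((X:PowerSeries ℤ)^c)^(2*(j+1))))
        = Gp (2*c) N := by
      unfold Gp
      apply Finset.prod_congr rfl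
      intro j _
      rw [← pow_mul]
      congr 2
      ring
    rw [h0, hG, ← pow_mul]
    ring
  have hR : ∀ k ∈ range (2*(N+1)+1),
      ((X:PowerSeries ℤ)^c)^k * ((X:PowerSeries ℤ)^c)^(EE (N+1) k) * qb (((X:PowerSeries ℤ)^c)^2) (2*(N+1)) k
      = (X:PowerSeries ℤ)^(c*(N+1)) * ((X:PowerSeries ℤ)^(c * EPsi (N+1) k) * qb ((X:PowerSeries ℤ)^(2*c)) (2*(N+1)) k) := by
    intro k _
    rw [← pow_mul, ← pow_mul, ← pow_mul, ← pow_add,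
      show c*k + c*EE (N+1) k = c*(N+1) + c * EPsi (N+1) k from by
        rw [← Nat.mul_add, EE_add_self, Nat.mul_add],
      show c*2 = 2*c from by ring, pow_add]
    ring
  rw [hL1, hL2, Finset.sum_congr rfl hR, ← Finset.mul_sum] at hj
  have hX : ((X:PowerSeries ℤ)^(c*(N+1))) ≠ 0 := pow_ne_zero _ X_ne_zero
  apply mul_left_cancel₀ hX
  linear_combination hj

lemma psi_prod (c : ℕ) (hc : 1 ≤ c) {n N : ℕ} (hN : 2*n+2 ≤ N+1) :
    MD n (2 * Gp (2*c) (N+1) * Gp (2*c) N * f (2*c)) (Spsi c (N+1)) := by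
  have hj := jtp_psi c N
  have h1 := sum_MD_psi c hc (N := N+1) hN
  rw [← hj] at h1
  have h2 := MD_mul h1 (MD_refl n (f (2*c)))
  have hu := f_mul_finv (2*c) (by omega)
  have e2 : (∑ k ∈ range (2*(N+1)+1), (X:PowerSeries ℤ)^(c * EPsi (N+1) k)) * finv (2*c) * f (2*c)
      = Spsi c (N+1) := by
    unfold Spsi
    linear_combination (∑ k ∈ range (2*(N+1)+1), (X:PowerSeries ℤ)^(c * EPsi (N+1) k)) * hu
  exact MD_congr rfl e2 h2

lemma EE_succ (K k : ℕ) : EE (K+1) (k+1) = EE K k := by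
  have : ((EE (K+1) (k+1) : ℤ)) = ((EE K k : ℤ)) := by
    rw [EE_cast, EE_cast]; push_cast; ring
  exact_mod_cast this

lemma EPsi_succ (N k : ℕ) : EPsi (N+1) (k+1) = EPsi N k := by
  have : ((EPsi (N+1) (k+1) : ℤ)) = ((EPsi N k : ℤ)) := by
    rw [EPsi_cast, EPsi_cast]; push_cast; ring
  exact_mod_cast this

lemma EE_bot (K : ℕ) : EE (K+1) 0 = (K+1)^2 := by
  have : ((EE (K+1) 0 : ℤ)) = (((K+1)^2 : ℕ) : ℤ) := by
    rw [EE_cast]; push_cast; ring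
  exact_mod_cast this

lemma EE_top (K : ℕ) : EE (K+1) (2*K+1+1) = (K+1)^2 := by
  have : ((EE (K+1) (2*K+1+1) : ℤ)) = (((K+1)^2 : ℕ) : ℤ) := by
    rw [EE_cast]; push_cast; ring
  exact_mod_cast this

lemma EPsi_bot (N : ℕ) : EPsi (N+1) 0 = N*(N+1) := by
  have : ((EPsi (N+1) 0 : ℤ)) = (((N*(N+1)) : ℕ) : ℤ) := by
    rw [EPsi_cast]; push_cast; ring
  exact_mod_cast this

lemma EPsi_top (N : ℕ) : EPsi (N+1) (2*N+1+1) = (N+1)*(N+2) := by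
  have : ((EPsi (N+1) (2*N+1+1) : ℤ)) = ((((N+1)*(N+2)) : ℕ) : ℤ) := by
    rw [EPsi_cast]; push_cast; ring
  exact_mod_cast this

lemma Sphi_succ (c K : ℕ) : Sphi c (K+1) = Sphi c K + 2 * (X:PowerSeries ℤ)^(c*(K+1)^2) := by
  unfold Sphi
  rw [show 2*(K+1)+1 = (2*K+1)+1+1 from by ring, Finset.sum_range_succ, Finset.sum_range_succ']
  have hshift : ∀ k ∈ range (2*K+1),
      (X:PowerSeries ℤ)^(c*EE (K+1) (k+1)) = (X:PowerSeries ℤ)^(c*EE K k) :=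
    fun k _ => by rw [EE_succ]
  rw [Finset.sum_congr rfl hshift, EE_top, EE_bot]
  ring

lemma Spsi_succ (c N : ℕ) : Spsi c (N+1)
    = Spsi c N + (X:PowerSeries ℤ)^(c*(N*(N+1))) + (X:PowerSeries ℤ)^(c*((N+1)*(N+2))) := by
  unfold Spsi
  rw [show 2*(N+1)+1 = (2*N+1)+1+1 from by ring, Finset.sum_range_succ, Finset.sum_range_succ']
  have hshift : ∀ k ∈ range (2*N+1),
      (X:PowerSeries ℤ)^(c*EPsi (N+1) (k+1)) = (X:PowerSeries ℤ)^(c*EPsi N k) :=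
    fun k _ => by rw [EPsi_succ]
  rw [Finset.sum_congr rfl hshift, EPsi_top, EPsi_bot]

lemma I1fin : ∀ N : ℕ, Sphi 1 (2*N+1)
    = Sphi 4 N + X * Spsi 4 N + X * (X:PowerSeries ℤ)^(4*(N*(N+1))) := by
  intro N
  induction N with
  | zero =>
    show Sphi 1 1 = _
    unfold Sphi Spsi
    norm_num [Finset.sum_range_succ, EE, EPsi, Nat.dist]
    ring
  | succ N ih =>
    rw [show 2*(N+1)+1 = (2*N+1)+1+1 from by ring, Sphi_succ 1 (2*N+1+1), Sphi_succ 1 (2*N+1),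
      Sphi_succ 4 N, Spsi_succ 4 N]
    rw [show 1*((2*N+1+1)^2) = 4*((N+1)^2) from by ring,
      show 1*((2*N+1+1+1)^2) = 4*((N+1)*(N+2)) + 1 from by ring, pow_succ]
    rw [ih]
    ring

lemma main_MD (n : ℕ) : MD n (f 2 ^ 5 * f 8 * f 16 ^ 2)
    (f 1 ^ 2 * (f 8 ^ 6 + 2 * X * f 4 ^ 2 * f 16 ^ 4)) := by
  obtain ⟨Nb', hNb'⟩ : ∃ Nb', Nb' = 2*n+1 := ⟨_, rfl⟩
  obtain ⟨Nb, hNb⟩ : ∃ Nb, Nb = Nb'+1 := ⟨_, rfl⟩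
  obtain ⟨K, hK⟩ : ∃ K, K = 2*Nb+1 := ⟨_, rfl⟩
  have hφ1 : MD n (Go 1 K ^ 2 * f 2) (Sphi 1 K) := by
    have := phi_prod 1 le_rfl (n := n) (N := K) (by omega)
    rwa [show 2*1 = 2 from by norm_num] at this
  have hφ4 : MD n (Go 4 Nb ^ 2 * f 8) (Sphi 4 Nb) := by
    have := phi_prod 4 (by omega) (n := n) (N := Nb) (by omega)
    rwa [show 2*4 = 8 from by norm_num] at this
  have hψ : MD n (2 * Gp 8 Nb * Gp 8 Nb' * f 8) (Spsi 4 Nb) := by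
    have := psi_prod 4 (by omega) (n := n) (N := Nb') (by omega)
    rwa [show 2*4 = 8 from by norm_num, ← hNb] at this
  have hQ1 : MD n (Go 1 K * f 1 * f 4) (f 2 * f 2) := by
    have := Go_f 1 le_rfl (n := n) (M := K) (by omega)
    rwa [show 4*1 = 4 from by norm_num, show 2*1 = 2 from by norm_num] at this
  have hQ4 : MD n (Go 4 Nb * f 4 * f 16) (f 8 * f 8) := by
    have := Go_f 4 (by omega) (n := n) (M := Nb) (by omega)
    rwa [show 4*4 = 16 from by norm_num, show 2*4 = 8 from by norm_num] at this
  have hG8a : MD n (f 8 * Gp 8 Nb) (f 16) := by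
    have := fG 8 (by omega) (n := n) (M := Nb) (by omega)
    rwa [show 2*8 = 16 from by norm_num] at this
  have hG8b : MD n (f 8 * Gp 8 Nb') (f 16) := by
    have := fG 8 (by omega) (n := n) (M := Nb') (by omega)
    rwa [show 2*8 = 16 from by norm_num] at this
  have hI : Sphi 1 K = Sphi 4 Nb + X * Spsi 4 Nb + X * (X:PowerSeries ℤ)^(4*(Nb*(Nb+1))) := by
    rw [hK]; exact I1fin Nb
  have hcorr : MD n (X * (X:PowerSeries ℤ)^(4*(Nb*(Nb+1)))) 0 := by
    rw [← pow_succ']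
    have hle : n+1 ≤ 4*(Nb*(Nb+1))+1 := by nlinarith
    have := MD_of_pow hle (1 : PowerSeries ℤ)
    exact MD_congr (by ring) rfl this
  -- part (i)
  have s1 : MD n (Sphi 1 K * (f 1^2 * f 4^2 * f 8 * f 16^2))
      ((Go 1 K ^ 2 * f 2) * (f 1^2 * f 4^2 * f 8 * f 16^2)) :=
    MD_mul (MD_symm hφ1) (MD_refl _ _)
  have e1 : (Go 1 K ^ 2 * f 2) * (f 1^2 * f 4^2 * f 8 * f 16^2)
      = ((Go 1 K * f 1 * f 4) * (Go 1 K * f 1 * f 4)) * (f 2 * f 8 * f 16^2) := by ring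
  have s2 : MD n (((Go 1 K * f 1 * f 4) * (Go 1 K * f 1 * f 4)) * (f 2 * f 8 * f 16^2))
      (((f 2 * f 2) * (f 2 * f 2)) * (f 2 * f 8 * f 16^2)) :=
    MD_mul (MD_mul hQ1 hQ1) (MD_refl _ _)
  have e2 : ((f 2 * f 2) * (f 2 * f 2)) * (f 2 * f 8 * f 16^2) = f 2^5 * f 8 * f 16^2 := by ring
  have part1 : MD n (f 2^5 * f 8 * f 16^2) (Sphi 1 K * (f 1^2 * f 4^2 * f 8 * f 16^2)) :=
    MD_symm (MD_trans (MD_congr rfl e1 s1) (MD_congr rfl e2 s2))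
  -- part (ii)
  have sA : MD n (Sphi 4 Nb * (f 1^2 * f 4^2 * f 8 * f 16^2)) (f 1^2 * f 8^6) := by
    have t1 : MD n (Sphi 4 Nb * (f 1^2 * f 4^2 * f 8 * f 16^2))
        ((Go 4 Nb ^2 * f 8) * (f 1^2 * f 4^2 * f 8 * f 16^2)) :=
      MD_mul (MD_symm hφ4) (MD_refl _ _)
    have eA : (Go 4 Nb ^2 * f 8) * (f 1^2 * f 4^2 * f 8 * f 16^2)
        = ((Go 4 Nb * f 4 * f 16) * (Go 4 Nb * f 4 * f 16)) * (f 1^2 * f 8^2) := by ring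
    have t2 : MD n (((Go 4 Nb * f 4 * f 16) * (Go 4 Nb * f 4 * f 16)) * (f 1^2 * f 8^2))
        (((f 8 * f 8) * (f 8 * f 8)) * (f 1^2 * f 8^2)) :=
      MD_mul (MD_mul hQ4 hQ4) (MD_refl _ _)
    have eA2 : ((f 8 * f 8) * (f 8 * f 8)) * (f 1^2 * f 8^2) = f 1^2 * f 8^6 := by ring
    exact MD_trans (MD_congr rfl eA t1) (MD_congr rfl eA2 t2)
  have sB : MD n ((X * Spsi 4 Nb) * (f 1^2 * f 4^2 * f 8 * f 16^2))
      (2 * X * f 1^2 * f 4^2 * f 16^4) := by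
    have t1 : MD n ((X * Spsi 4 Nb) * (f 1^2 * f 4^2 * f 8 * f 16^2))
        ((X * (2 * Gp 8 Nb * Gp 8 Nb' * f 8)) * (f 1^2 * f 4^2 * f 8 * f 16^2)) :=
      MD_mul (MD_mul (MD_refl _ _) (MD_symm hψ)) (MD_refl _ _)
    have eB : (X * (2 * Gp 8 Nb * Gp 8 Nb' * f 8)) * (f 1^2 * f 4^2 * f 8 * f 16^2)
        = ((f 8 * Gp 8 Nb) * (f 8 * Gp 8 Nb')) * (2 * X * f 1^2 * f 4^2 * f 16^2) := by ring
    have t2 : MD n (((f 8 * Gp 8 Nb) * (f 8 * Gp 8 Nb')) * (2 * X * f 1^2 * f 4^2 * f 16^2))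
        ((f 16 * f 16) * (2 * X * f 1^2 * f 4^2 * f 16^2)) :=
      MD_mul (MD_mul hG8a hG8b) (MD_refl _ _)
    have eB2 : (f 16 * f 16) * (2 * X * f 1^2 * f 4^2 * f 16^2)
        = 2 * X * f 1^2 * f 4^2 * f 16^4 := by ring
    exact MD_trans (MD_congr rfl eB t1) (MD_congr rfl eB2 t2)
  have sC : MD n ((X * (X:PowerSeries ℤ)^(4*(Nb*(Nb+1)))) * (f 1^2 * f 4^2 * f 8 * f 16^2))
      0 := by
    have := MD_mul hcorr (MD_refl n (f 1^2 * f 4^2 * f 8 * f 16^2))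
    exact MD_congr rfl (by ring) this
  have part2 : MD n (Sphi 1 K * (f 1^2 * f 4^2 * f 8 * f 16^2))
      (f 1 ^ 2 * (f 8 ^ 6 + 2 * X * f 4 ^ 2 * f 16 ^ 4)) := by
    have hsplit : Sphi 1 K * (f 1^2 * f 4^2 * f 8 * f 16^2)
        = Sphi 4 Nb * (f 1^2 * f 4^2 * f 8 * f 16^2)
          + (X * Spsi 4 Nb) * (f 1^2 * f 4^2 * f 8 * f 16^2)
          + (X * (X:PowerSeries ℤ)^(4*(Nb*(Nb+1)))) * (f 1^2 * f 4^2 * f 8 * f 16^2) := by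
      rw [hI]; ring
    have := MD_add (MD_add sA sB) sC
    exact MD_congr hsplit.symm (by ring) this
  exact MD_trans part1 part2

theorem two_dissection_one_over_f1_sq :
    finv 1 ^ 2
      = f 8 ^ 5 * finv 2 ^ 5 * finv 16 ^ 2
        + 2 * PowerSeries.X * f 4 ^ 2 * f 16 ^ 2 * finv 2 ^ 5 * finv 8
    ∧ f 2 ^ 5 * f 8 * f 16 ^ 2
      = f 1 ^ 2 * (f 8 ^ 6 + 2 * PowerSeries.X * f 4 ^ 2 * f 16 ^ 4) := by
  have hT : f 2 ^ 5 * f 8 * f 16 ^ 2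
      = f 1 ^ 2 * (f 8 ^ 6 + 2 * PowerSeries.X * f 4 ^ 2 * f 16 ^ 4) :=
    eq_of_MD fun n => main_MD n
  refine ⟨?_, hT⟩
  have e1 := f_mul_finv 1 (by norm_num)
  have e2 := f_mul_finv 2 (by norm_num)
  have e8 := f_mul_finv 8 (by norm_num)
  have e16 := f_mul_finv 16 (by norm_num)
  calc finv 1 ^ 2
      = finv 1 ^ 2 * (f 2 * finv 2)^5 * (f 8 * finv 8) * (f 16 * finv 16)^2 := by
        rw [e2, e8, e16]; ring
    _ = (f 2^5 * f 8 * f 16^2) * (finv 1^2 * finv 2^5 * finv 8 * finv 16^2) := by ring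
    _ = (f 1 ^ 2 * (f 8 ^ 6 + 2 * PowerSeries.X * f 4 ^ 2 * f 16 ^ 4))
          * (finv 1^2 * finv 2^5 * finv 8 * finv 16^2) := by rw [hT]
    _ = (f 1 * finv 1)^2 * (f 8^5 * (f 8 * finv 8) * finv 2^5 * finv 16^2
          + 2 * PowerSeries.X * f 4^2 * f 16^2 * (f 16 * finv 16)^2 * finv 2^5 * finv 8) := by
        ring
    _ = f 8 ^ 5 * finv 2 ^ 5 * finv 16 ^ 2
        + 2 * PowerSeries.X * f 4 ^ 2 * f 16 ^ 2 * finv 2 ^ 5 * finv 8 := by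
        rw [e1, e8, e16]; ring

end JTP
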